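/- Let a > 0 and let φ : [0,a] → ℝ be a strictly increasing, concave, continuous function with φ(0) = 0 and φ(a) = 1. Then the norm of the Lorentz space Λ(φ)[0,a] is strictly monotone: if x, y ∈ Λ(φ), |x(t)| ≤ |y(t)| for a.e. t ∈ [0,a], and the set {t ∈ [0,a] : |x(t)| < |y(t)|} has positive measure, then ‖x‖_{Λ(φ)} < ‖y‖_{Λ(φ)}. -/

import Mathlib

open MeasureTheory Set Filter Topology
open scoped ENNReal NNReal Classical

noncomputable section

/-- The distribution function `m {s ∈ [0,a] : τ < ‖f s‖}` of `f` on `[0,a]`. -/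
def distrib {E : Type*} [NormedAddCommGroup E] (a : ℝ) (f : ℝ → E) (τ : ℝ) : ℝ≥0∞ :=
  volume {s ∈ Set.Icc (0:ℝ) a | τ < ‖f s‖}

/-- The decreasing rearrangement `f*` of `f` on `[0,a]`:
`f*(t) = inf {τ ≥ 0 : m {s ∈ [0,a] : ‖f s‖ > τ} ≤ t}`. -/
def rearr {E : Type*} [NormedAddCommGroup E] (a : ℝ) (f : ℝ → E) (t : ℝ) : ℝ :=
  sInf {τ : ℝ | 0 ≤ τ ∧ distrib a f τ ≤ ENNReal.ofReal t}

/-- The clamp of `t : ℝ` to the interval `[0,a]`. -/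
def clampIcc (a t : ℝ) : ℝ := min (max t 0) a

lemma clampIcc_mem (a t : ℝ) (ha : 0 ≤ a) : clampIcc a t ∈ Set.Icc (0:ℝ) a :=
  ⟨le_min (le_max_right t 0) ha, min_le_right _ _⟩

lemma clampIcc_mono (a : ℝ) : Monotone (clampIcc a) := fun _ _ hst =>
  min_le_min (max_le_max hst le_rfl) le_rfl

lemma clampIcc_continuous (a : ℝ) : Continuous (clampIcc a) :=
  (continuous_id.max continuous_const).min continuous_const

/-- The Stieltjes integrator associated with an increasing continuous function `φ` on `[0,a]`
(extended to all of `ℝ` as a constant outside `[0,a]`).  Its Lebesgue–Stieltjes measure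
realizes the integrals `∫₀^a ⋯ dφ(t)`. -/
def stieltjesOfOn (φ : ℝ → ℝ) (a : ℝ) : StieltjesFunction ℝ :=
  if h : 0 ≤ a ∧ MonotoneOn φ (Set.Icc 0 a) ∧ ContinuousOn φ (Set.Icc 0 a) then
    { toFun := fun t => φ (clampIcc a t)
      mono' := fun s t hst =>
        h.2.1 (clampIcc_mem a s h.1) (clampIcc_mem a t h.1) (clampIcc_mono a hst)
      right_continuous' := fun t =>
        ((h.2.2.comp_continuous (clampIcc_continuous a)
          (fun x => clampIcc_mem a x h.1)).continuousAt).continuousWithinAt }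
  else StieltjesFunction.id

/-- The Lorentz space functional `‖f‖_{Λ(φ)} = ∫₀^a f*(t) dφ(t)` (with values in `ℝ≥0∞`). -/
def eLorentzNorm {E : Type*} [NormedAddCommGroup E] (φ : ℝ → ℝ) (a : ℝ) (f : ℝ → E) : ℝ≥0∞ :=
  ∫⁻ t in Set.Ioc (0:ℝ) a, ENNReal.ofReal (rearr a f t) ∂(stieltjesOfOn φ a).measure

/-- Membership in the Lorentz space `Λ(φ)[0,a]`. -/
def MemLorentz {E : Type*} [NormedAddCommGroup E] [MeasurableSpace E]
    (φ : ℝ → ℝ) (a : ℝ) (f : ℝ → E) : Prop :=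
  Measurable f ∧ eLorentzNorm φ a f < ⊤

/-- The Hardy–Lorentz space functional
`‖f‖_{H(Λ(φ))} = sup_{0 ≤ r < 1} ‖t ↦ f (r e^{it})‖_{Λ(φ)}` for functions on the unit disk. -/
def eHLNorm (φ : ℝ → ℝ) (f : ℂ → ℂ) : ℝ≥0∞ :=
  ⨆ r ∈ Set.Ico (0:ℝ) 1,
    eLorentzNorm φ (2 * Real.pi)
      (fun t : ℝ => f (Complex.ofReal r * Complex.exp (Complex.I * Complex.ofReal t)))

/-- The classical `H¹` functional `‖f‖_{H¹} = sup_{0 ≤ r < 1} (1/(2π)) ∫₀^{2π} |f(r e^{it})| dt`. -/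
def eH1Norm (f : ℂ → ℂ) : ℝ≥0∞ :=
  ⨆ r ∈ Set.Ico (0:ℝ) 1,
    (ENNReal.ofReal (2 * Real.pi))⁻¹ *
      ∫⁻ t in Set.Ioc (0:ℝ) (2 * Real.pi),
        ENNReal.ofReal ‖f (Complex.ofReal r * Complex.exp (Complex.I * Complex.ofReal t))‖

/-- `fb` is the boundary (radial limit) function of `f`: for a.e. `t ∈ [0,2π]`,
`f(r e^{it}) → fb t` as `r → 1⁻`.  (For `f ∈ H¹` such a function exists and coincides a.e.
with the nontangential limit `f̃`.) -/
def HasRadialLimits (f : ℂ → ℂ) (fb : ℝ → ℂ) : Prop :=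
  ∀ᵐ t ∂(volume.restrict (Set.Icc (0:ℝ) (2 * Real.pi))),
    Filter.Tendsto (fun r : ℝ => f (Complex.ofReal r * Complex.exp (Complex.I * Complex.ofReal t)))
      (nhdsWithin 1 (Set.Iio 1)) (nhds (fb t))

/-- `f` (with boundary function `fb`) is an outer function:
`f` is non-null and `ln |f 0| = (1/(2π)) ∫₀^{2π} ln |fb s| ds`. -/
def IsOuter (f : ℂ → ℂ) (fb : ℝ → ℂ) : Prop :=
  (∃ z ∈ Metric.ball (0:ℂ) 1, f z ≠ 0) ∧
    Real.log ‖f 0‖ =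
      (1 / (2 * Real.pi)) * ∫ s in Set.Ioc (0:ℝ) (2 * Real.pi), Real.log ‖fb s‖

/-- The set `E₊ = {t ∈ [0,a] : h t > 0}`. -/
def posSet (a : ℝ) (h : ℝ → ℝ) : Set ℝ := {t ∈ Set.Icc (0:ℝ) a | 0 < h t}

/-- The set `E₋ = {t ∈ [0,a] : h t < 0}`. -/
def negSet (a : ℝ) (h : ℝ → ℝ) : Set ℝ := {t ∈ Set.Icc (0:ℝ) a | h t < 0}


/-!
By the layer cake formula, `‖f‖_{Λ(φ)} = ∫₀^∞ (φ(m_f(s)) - φ(0)) ds` with `m_f` the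
distribution function of `f`, because the level set `{t : s < f*(t)}` is the interval
`(0, m_f(s))`. If `|x| ≤ |y|` a.e. then `m_x ≤ m_y`. If moreover `|x| < |y|` on a set of
positive measure, some rational level `q` separates `|x| < q < |y|` on a set of positive
measure, so `m_x(q) < m_y(q)`; by right continuity of `m_y` this strict inequality persists
on an interval `(q, q + ε)`, where strict monotonicity of `φ` makes the integrand of `‖y‖`
strictly larger. Since `‖x‖ < ∞`, the integrals differ.
-/

section Distrib

variable {E : Type*} [NormedAddCommGroup E] {a : ℝ} {f : ℝ → E}

lemma distrib_antitone : Antitone (distrib a f) := fun _ _ hst =>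
  measure_mono fun _ hu => ⟨hu.1, hst.trans_lt hu.2⟩

lemma distrib_le_ofReal (τ : ℝ) : distrib a f τ ≤ ENNReal.ofReal a :=
  (measure_mono (sep_subset _ _)).trans_eq (by rw [Real.volume_Icc, sub_zero])

lemma distrib_ne_top (τ : ℝ) : distrib a f τ ≠ ∞ :=
  ((distrib_le_ofReal τ).trans_lt ENNReal.ofReal_lt_top).ne

lemma toReal_distrib_mem_Icc (ha : 0 ≤ a) (τ : ℝ) : (distrib a f τ).toReal ∈ Icc 0 a :=
  ⟨ENNReal.toReal_nonneg, ENNReal.toReal_le_of_le_ofReal ha (distrib_le_ofReal τ)⟩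

lemma exists_lt_distrib_add {c : ℝ≥0∞} {τ : ℝ} (h : c < distrib a f τ) :
    ∃ ε > 0, c < distrib a f (τ + ε) := by
  let S : ℕ → Set ℝ := fun n => {s ∈ Icc (0:ℝ) a | τ + 1 / (n + 1) < ‖f s‖}
  have hS : Monotone S := fun n m hnm s hs =>
    ⟨hs.1, lt_of_le_of_lt (by gcongr) hs.2⟩
  have hunion : ⋃ n, S n = {s ∈ Icc (0:ℝ) a | τ < ‖f s‖} := by
    ext s
    simp only [S, mem_iUnion, mem_sep_iff]
    constructor
    · rintro ⟨n, hs, hlt⟩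
      exact ⟨hs, lt_of_le_of_lt (le_add_of_nonneg_right Nat.one_div_pos_of_nat.le) hlt⟩
    · rintro ⟨hs, hlt⟩
      obtain ⟨n, hn⟩ := exists_nat_one_div_lt (sub_pos.mpr hlt)
      exact ⟨n, hs, by linarith⟩
  rw [distrib, ← hunion, hS.measure_iUnion, lt_iSup_iff] at h
  obtain ⟨n, hn⟩ := h
  exact ⟨1 / (n + 1), Nat.one_div_pos_of_nat, hn⟩

variable [MeasurableSpace E] [OpensMeasurableSpace E]

lemma tendsto_distrib_atTop (hf : Measurable f) : Tendsto (distrib a f) atTop (𝓝 0) := by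
  have hempty : ⋂ τ : ℝ, {s ∈ Icc (0:ℝ) a | τ < ‖f s‖} = ∅ :=
    iInter_eq_empty_iff.mpr fun s => ⟨‖f s‖, fun hs => lt_irrefl _ hs.2⟩
  have h := tendsto_measure_iInter_atTop (μ := volume)
    (s := fun τ : ℝ => {s ∈ Icc (0:ℝ) a | τ < ‖f s‖})
    (fun _ => (measurableSet_Icc.inter
      (measurableSet_lt measurable_const hf.norm)).nullMeasurableSet)
    (fun _ _ hst _ hs => ⟨hs.1, hst.trans_lt hs.2⟩) ⟨0, distrib_ne_top 0⟩
  rwa [hempty, measure_empty] at h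

end Distrib

section Rearr

variable {E : Type*} [NormedAddCommGroup E] {a : ℝ} {f : ℝ → E}

lemma rearr_nonneg (t : ℝ) : 0 ≤ rearr a f t :=
  Real.sInf_nonneg fun _ hτ => hτ.1

lemma rearr_le {t τ : ℝ} (hτ : 0 ≤ τ) (h : distrib a f τ ≤ ENNReal.ofReal t) :
    rearr a f t ≤ τ :=
  csInf_le ⟨0, fun _ hσ => hσ.1⟩ ⟨hτ, h⟩

variable [MeasurableSpace E] [OpensMeasurableSpace E]

lemma lt_rearr_iff (hf : Measurable f) {s t : ℝ} (hs : 0 ≤ s) (ht : 0 < t) :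
    s < rearr a f t ↔ ENNReal.ofReal t < distrib a f s := by
  refine ⟨fun h => not_le.mp fun hle => (rearr_le hs hle).not_gt h, fun h => ?_⟩
  by_contra! hle
  obtain ⟨ε, hε, hlt⟩ := exists_lt_distrib_add h
  have hne : {τ : ℝ | 0 ≤ τ ∧ distrib a f τ ≤ ENNReal.ofReal t}.Nonempty :=
    (((tendsto_distrib_atTop hf).eventually (gt_mem_nhds (ENNReal.ofReal_pos.mpr ht))).and
      (eventually_ge_atTop 0)).exists.imp fun _ hτ => ⟨hτ.2, hτ.1.le⟩
  obtain ⟨τ, hτ, hτlt⟩ := Real.lt_sInf_add_pos hne hε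
  have : distrib a f (s + ε) ≤ ENNReal.ofReal t :=
    (distrib_antitone (by rw [rearr] at hle; linarith)).trans hτ.2
  exact this.not_gt hlt

lemma rearr_antitoneOn (hf : Measurable f) : AntitoneOn (rearr a f) (Ioi 0) := by
  intro t ht t' _ htt'
  by_contra! hlt
  obtain ⟨s, hts, hst'⟩ := exists_between hlt
  have hs : 0 ≤ s := (rearr_nonneg t).trans hts.le
  have h : distrib a f s ≤ ENNReal.ofReal t :=
    not_lt.mp ((lt_rearr_iff hf hs ht).not.mp hts.not_gt)
  have h' : ENNReal.ofReal t' < distrib a f s := (lt_rearr_iff hf hs (ht.trans_le htt')).mp hst'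
  exact (h'.trans_le h).not_ge (ENNReal.ofReal_le_ofReal htt')

end Rearr

section Stieltjes

variable {φ : ℝ → ℝ} {a : ℝ}

lemma stieltjesOfOn_eq (ha : 0 ≤ a) (hm : MonotoneOn φ (Icc 0 a))
    (hc : ContinuousOn φ (Icc 0 a)) :
    ⇑(stieltjesOfOn φ a) = φ ∘ clampIcc a := by
  rw [stieltjesOfOn, dif_pos ⟨ha, hm, hc⟩]
  rfl

lemma clampIcc_of_mem {t : ℝ} (ht : t ∈ Icc 0 a) : clampIcc a t = t := by
  rw [clampIcc, max_eq_left ht.1, min_eq_left ht.2]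

lemma stieltjesOfOn_measure_Ioo (ha : 0 ≤ a) (hm : MonotoneOn φ (Icc 0 a))
    (hc : ContinuousOn φ (Icc 0 a)) {d : ℝ} (hd : d ∈ Icc 0 a) :
    (stieltjesOfOn φ a).measure (Ioo 0 d) = ENNReal.ofReal (φ d - φ 0) := by
  have hcont : Continuous (stieltjesOfOn φ a) := by
    rw [stieltjesOfOn_eq ha hm hc]
    exact hc.comp_continuous (clampIcc_continuous a) fun t => clampIcc_mem a t ha
  rw [StieltjesFunction.measure_Ioo,
    leftLim_eq_of_tendsto (hcont.tendsto d |>.mono_left nhdsWithin_le_nhds),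
    stieltjesOfOn_eq ha hm hc, Function.comp_apply, Function.comp_apply,
    clampIcc_of_mem hd, clampIcc_of_mem ⟨le_rfl, ha⟩]

end Stieltjes

section LayerCake

/-- The `dφ`-measure of the level set `{t ∈ (0,a] : s < f*(t)} = (0, m_f(s))` of the
rearrangement, where `m_f = distrib a f`. -/
def lorentzLayer {E : Type*} [NormedAddCommGroup E] (φ : ℝ → ℝ) (a : ℝ) (f : ℝ → E)
    (s : ℝ) : ℝ≥0∞ :=
  ENNReal.ofReal (φ (distrib a f s).toReal - φ 0)

variable {E F : Type*} [NormedAddCommGroup E] [NormedAddCommGroup F] {φ : ℝ → ℝ}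
  {a s τ : ℝ} {f : ℝ → E} {g : ℝ → F}

lemma lorentzLayer_le_lorentzLayer (ha : 0 ≤ a) (hm : MonotoneOn φ (Icc 0 a))
    (h : distrib a f s ≤ distrib a g τ) : lorentzLayer φ a f s ≤ lorentzLayer φ a g τ :=
  ENNReal.ofReal_le_ofReal <| sub_le_sub_right (hm (toReal_distrib_mem_Icc ha s)
    (toReal_distrib_mem_Icc ha τ) (ENNReal.toReal_mono (distrib_ne_top τ) h)) _

lemma lorentzLayer_lt_lorentzLayer (ha : 0 ≤ a) (hφ : StrictMonoOn φ (Icc 0 a))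
    (h : distrib a f s < distrib a g τ) : lorentzLayer φ a f s < lorentzLayer φ a g τ := by
  have hlt : φ (distrib a f s).toReal < φ (distrib a g τ).toReal :=
    hφ (toReal_distrib_mem_Icc ha s) (toReal_distrib_mem_Icc ha τ)
      ((ENNReal.toReal_lt_toReal (distrib_ne_top s) (distrib_ne_top τ)).mpr h)
  have h0 : φ 0 ≤ φ (distrib a f s).toReal :=
    hφ.monotoneOn ⟨le_rfl, ha⟩ (toReal_distrib_mem_Icc ha s) ENNReal.toReal_nonneg
  exact (ENNReal.ofReal_lt_ofReal_iff (by linarith)).mpr (by linarith)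

variable [MeasurableSpace E] [OpensMeasurableSpace E]

lemma eLorentzNorm_eq_lintegral_lorentzLayer (ha : 0 ≤ a) (hm : MonotoneOn φ (Icc 0 a))
    (hc : ContinuousOn φ (Icc 0 a)) (hf : Measurable f) :
    eLorentzNorm φ a f = ∫⁻ s in Ioi 0, lorentzLayer φ a f s := by
  rw [eLorentzNorm, lintegral_eq_lintegral_meas_lt _ (ae_of_all _ rearr_nonneg)
    (aemeasurable_restrict_of_antitoneOn measurableSet_Ioc
      ((rearr_antitoneOn hf).mono Ioc_subset_Ioi_self))]
  refine setLIntegral_congr_fun measurableSet_Ioi fun s (hs : 0 < s) => ?_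
  have hd := toReal_distrib_mem_Icc (f := f) ha s
  have hlevel : {t | s < rearr a f t} ∩ Ioc 0 a = Ioo 0 (distrib a f s).toReal := by
    ext t
    simp only [mem_inter_iff, mem_ofPred_eq, mem_Ioc, mem_Ioo]
    constructor
    · rintro ⟨hst, ht, -⟩
      exact ⟨ht, (ENNReal.ofReal_lt_iff_lt_toReal ht.le (distrib_ne_top s)).mp
        ((lt_rearr_iff hf hs.le ht).mp hst)⟩
    · rintro ⟨ht, htd⟩
      exact ⟨(lt_rearr_iff hf hs.le ht).mpr
        ((ENNReal.ofReal_lt_iff_lt_toReal ht.le (distrib_ne_top s)).mpr htd),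
        ht, htd.le.trans hd.2⟩
  rw [Measure.restrict_apply' measurableSet_Ioc, hlevel, stieltjesOfOn_measure_Ioo ha hm hc hd,
    lorentzLayer]

end LayerCake

section Comparison

variable {E F : Type*} [NormedAddCommGroup E] [NormedAddCommGroup F] {a : ℝ}
  {x : ℝ → E} {y : ℝ → F}

lemma distrib_le_distrib_of_ae_norm_le
    (hle : ∀ᵐ t ∂(volume.restrict (Icc (0:ℝ) a)), ‖x t‖ ≤ ‖y t‖) (τ : ℝ) :
    distrib a x τ ≤ distrib a y τ := by
  refine measure_mono_ae ?_
  filter_upwards [(ae_restrict_iff' measurableSet_Icc).mp hle] with t ht hτ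
  exact ⟨hτ.1, hτ.2.trans_le (ht hτ.1)⟩

variable [MeasurableSpace E] [OpensMeasurableSpace E] [MeasurableSpace F] [OpensMeasurableSpace F]

lemma exists_distrib_lt_distrib (hx : Measurable x) (hy : Measurable y)
    (hle : ∀ᵐ t ∂(volume.restrict (Icc (0:ℝ) a)), ‖x t‖ ≤ ‖y t‖)
    (hlt : 0 < volume {t ∈ Icc (0:ℝ) a | ‖x t‖ < ‖y t‖}) :
    ∃ q : ℝ, 0 ≤ q ∧ distrib a x q < distrib a y q := by
  let G : ℝ → Set ℝ := fun q => {t ∈ Icc (0:ℝ) a | ‖x t‖ < q ∧ q < ‖y t‖}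
  obtain ⟨q, hq⟩ : ∃ q : ℚ, 0 < volume (G q) := by
    by_contra! h
    refine hlt.ne' (measure_mono_null (fun t ht => ?_)
      (measure_iUnion_null fun q => nonpos_iff_eq_zero.mp (h q)))
    obtain ⟨q, hxq, hqy⟩ := exists_rat_btwn ht.2
    exact mem_iUnion.mpr ⟨q, ht.1, hxq, hqy⟩
  obtain ⟨t, ht⟩ := nonempty_of_measure_ne_zero hq.ne'
  refine ⟨q, (norm_nonneg _).trans ht.2.1.le, ?_⟩
  have hdisj : Disjoint {t ∈ Icc (0:ℝ) a | (q:ℝ) < ‖x t‖} (G q) :=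
    disjoint_left.mpr fun t ht ht' => ht.2.not_gt ht'.2.1
  have hGmeas : MeasurableSet (G q) :=
    measurableSet_Icc.inter ((measurableSet_lt hx.norm measurable_const).inter
      (measurableSet_lt measurable_const hy.norm))
  have hunion : distrib a x q + volume (G q) ≤ distrib a y q := by
    rw [distrib, ← measure_union hdisj hGmeas]
    refine measure_mono_ae ?_
    filter_upwards [(ae_restrict_iff' measurableSet_Icc).mp hle] with t ht hq
    rcases hq with hxq | hG
    · exact ⟨hxq.1, hxq.2.trans_le (ht hxq.1)⟩
    · exact ⟨hG.1, hG.2.2⟩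
  exact (ENNReal.lt_add_right (distrib_ne_top _) hq.ne').trans_le hunion

lemma eLorentzNorm_lt_of_distrib_le_of_lt {φ : ℝ → ℝ} (ha : 0 ≤ a)
    (hφ : StrictMonoOn φ (Icc 0 a)) (hc : ContinuousOn φ (Icc 0 a))
    (hx : Measurable x) (hy : Measurable y) (hxfin : eLorentzNorm φ a x ≠ ∞)
    (hle : ∀ τ, distrib a x τ ≤ distrib a y τ) {q : ℝ} (hq0 : 0 ≤ q)
    (hq : distrib a x q < distrib a y q) :
    eLorentzNorm φ a x < eLorentzNorm φ a y := by
  have hm := hφ.monotoneOn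
  obtain ⟨ε, hε, hqε⟩ := exists_lt_distrib_add hq
  have hlt_on : ∀ s ∈ Ioo q (q + ε), distrib a x s < distrib a y s := fun s hs =>
    ((distrib_antitone hs.1.le).trans_lt hqε).trans_le (distrib_antitone hs.2.le)
  have hpos : (volume.restrict (Ioi 0)) (Ioo q (q + ε)) ≠ 0 := by
    rw [Measure.restrict_apply' measurableSet_Ioi,
      inter_eq_self_of_subset_left (Ioo_subset_Ioi_self.trans (Ioi_subset_Ioi hq0)),
      Real.volume_Ioo]
    simpa using hε
  have hanti : Antitone (lorentzLayer φ a y) := fun _ _ hss' =>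
    lorentzLayer_le_lorentzLayer ha hm (distrib_antitone hss')
  rw [eLorentzNorm_eq_lintegral_lorentzLayer ha hm hc hx] at hxfin ⊢
  rw [eLorentzNorm_eq_lintegral_lorentzLayer ha hm hc hy]
  exact lintegral_strict_mono_of_ae_le_of_ae_lt_on hanti.measurable.aemeasurable hxfin
    (ae_of_all _ fun s => lorentzLayer_le_lorentzLayer ha hm (hle s)) hpos
    (ae_of_all _ fun s hs => lorentzLayer_lt_lorentzLayer ha hφ (hlt_on s hs))

end Comparison

theorem lorentz_norm_strictly_monotone_general (a : ℝ) (ha : 0 < a) (φ : ℝ → ℝ)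
    (hcont : ContinuousOn φ (Set.Icc 0 a))
    (hmono : StrictMonoOn φ (Set.Icc 0 a))
    (x y : ℝ → ℂ) (hx : MemLorentz φ a x) (hy : MemLorentz φ a y)
    (hle : ∀ᵐ t ∂(volume.restrict (Set.Icc (0:ℝ) a)), ‖x t‖ ≤ ‖y t‖)
    (hlt : 0 < volume {t ∈ Set.Icc (0:ℝ) a | ‖x t‖ < ‖y t‖}) :
    eLorentzNorm φ a x < eLorentzNorm φ a y := by
  obtain ⟨q, hq0, hq⟩ := exists_distrib_lt_distrib hx.1 hy.1 hle hlt
  exact eLorentzNorm_lt_of_distrib_le_of_lt ha.le hmono hcont hx.1 hy.1 hx.2.ne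
    (distrib_le_distrib_of_ae_norm_le hle) hq0 hq

/-- If `φ` is strictly increasing, concave, continuous on `[0,a]` with
`φ 0 = 0`, `φ a = 1`, then the norm of `Λ(φ)[0,a]` is strictly monotone. -/
theorem lorentz_norm_strictly_monotone (a : ℝ) (ha : 0 < a) (φ : ℝ → ℝ)
    (hconc : ConcaveOn ℝ (Set.Icc 0 a) φ)
    (hcont : ContinuousOn φ (Set.Icc 0 a))
    (hmono : StrictMonoOn φ (Set.Icc 0 a))
    (hφ0 : φ 0 = 0) (hφa : φ a = 1)
    (x y : ℝ → ℂ) (hx : MemLorentz φ a x) (hy : MemLorentz φ a y)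
    (hle : ∀ᵐ t ∂(volume.restrict (Set.Icc (0:ℝ) a)), ‖x t‖ ≤ ‖y t‖)
    (hlt : 0 < volume {t ∈ Set.Icc (0:ℝ) a | ‖x t‖ < ‖y t‖}) :
    eLorentzNorm φ a x < eLorentzNorm φ a y :=
  lorentz_norm_strictly_monotone_general a ha φ hcont hmono x y hx hy hle hlt

end
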